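/- Let τ : S_n(ℂ) → S_n(ℂ) be a bi-quantum channel with n ≥ 2, and suppose σ_2(τ) < 1. Then σ_1(τ) = 1 and the minimum output entropy satisfies H(τ) ≥ −(1/2) log(σ_2(τ)² + (1 − σ_2(τ)²)/n). -/

import Mathlib

open scoped ComplexOrder
open Matrix Kronecker

/-- Frobenius norm of a complex matrix: `√(tr (X Xᴴ))`. -/
noncomputable def frobNorm {n m : Type*} [Fintype n] [Fintype m]
    (X : Matrix n m ℂ) : ℝ :=
  Real.sqrt ((X * Xᴴ).trace.re)

/-- Operator norm `σ₁(τ) = ‖τ‖` of a map between spaces of Hermitian matrices,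
with respect to the Frobenius norm. -/
noncomputable def opNorm {n m : Type*} [Fintype n] [Fintype m]
    (τ : Matrix n n ℂ → Matrix m m ℂ) : ℝ :=
  sSup {c : ℝ | ∃ X : Matrix n n ℂ, X.IsHermitian ∧ frobNorm X ≤ 1 ∧ c = frobNorm (τ X)}

/-- The second singular value of a map between spaces of Hermitian matrices, via the
Courant–Fischer min-max characterization: the infimum over nonzero Hermitian `U` of the
norm of `τ` restricted to the orthogonal complement of `U`. -/
noncomputable def sigma2 {n m : Type*} [Fintype n] [Fintype m]
    (τ : Matrix n n ℂ → Matrix m m ℂ) : ℝ :=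
  sInf {c : ℝ | ∃ U : Matrix n n ℂ, U.IsHermitian ∧ U ≠ 0 ∧
    c = sSup {d : ℝ | ∃ X : Matrix n n ℂ, X.IsHermitian ∧ frobNorm X ≤ 1 ∧
      (U * X).trace.re = 0 ∧ d = frobNorm (τ X)}}

/-- Largest eigenvalue `λ₁` of a Hermitian matrix (junk value `0` otherwise). -/
noncomputable def lambdaMax {n : Type*} [Fintype n] [DecidableEq n]
    (Y : Matrix n n ℂ) : ℝ :=
  if hY : Y.IsHermitian then ⨆ i, hY.eigenvalues i else 0

/-- von Neumann entropy `H(Y) = -∑ λᵢ log λᵢ` of a Hermitian matrix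
(junk value `0` otherwise); note `Real.log 0 = 0`. -/
noncomputable def entropy {n : Type*} [Fintype n] [DecidableEq n]
    (Y : Matrix n n ℂ) : ℝ :=
  if hY : Y.IsHermitian then -∑ i, hY.eigenvalues i * Real.log (hY.eigenvalues i) else 0

/-- Minimum output entropy of a channel: the infimum of `H(τ X)` over density matrices `X`. -/
noncomputable def minEntropy {n m : Type*} [Fintype n] [DecidableEq n] [Fintype m] [DecidableEq m]
    (τ : Matrix n n ℂ → Matrix m m ℂ) : ℝ :=
  sInf {h : ℝ | ∃ X : Matrix n n ℂ, X.PosSemidef ∧ X.trace = 1 ∧ h = entropy (τ X)}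

/-- Eigenvalues of a Hermitian matrix arranged in decreasing order:
`eigsDesc Y 0 = λ₁ ≥ eigsDesc Y 1 = λ₂ ≥ …` (junk value `0` if not Hermitian). -/
noncomputable def eigsDesc {n : ℕ} (Y : Matrix (Fin n) (Fin n) ℂ) : Fin n → ℝ :=
  if hY : Y.IsHermitian then fun i => hY.eigenvalues (Tuple.sort hY.eigenvalues i.rev)
  else fun _ => 0

/-- The sum `λ₁ + ⋯ + λ_k` of the `k` largest eigenvalues of a Hermitian matrix. -/
noncomputable def sumTopEigs {n : ℕ} (k : ℕ) (Y : Matrix (Fin n) (Fin n) ℂ) : ℝ :=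
  ∑ i : Fin n, if (i : ℕ) < k then eigsDesc Y i else 0

/-!
A bi-quantum channel `τ` is trace preserving and unital, so it fixes `1` and maps traceless
matrices to traceless ones. It also contracts the Frobenius norm: with `Bᵢⱼ = Aᵢᴴ Aⱼ` one has
`‖τ X‖² = ∑ᵢⱼ ⟪X Bᵢⱼ, Bᵢⱼ X⟫`, and after `2⟪P, Q⟫ ≤ ‖P‖² + ‖Q‖²` both sums of squares collapse
to `‖X‖²` by the two Kraus identities. Hence `σ₁(τ) = 1`, attained at `1`.

For traceless Hermitian `Δ`, every hyperplane `U^⊥` meets the plane spanned by `1` and `Δ`, and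
on that plane `τ` contracts no more than on `Δ`; so `‖τ Δ‖ ≤ σ₂(τ) ‖Δ‖`. Writing a density matrix
as `X = 1/n + Δ` gives `tr (τ X)² ≤ σ₂² + (1 - σ₂²)/n`, and the entropy of a probability vector
`p` is at least `-log (max pᵢ) ≥ -½ log ∑ pᵢ²`.
-/

lemma Matrix.IsHermitian.real_smul {m : Type*} {X : Matrix m m ℂ} (hX : X.IsHermitian) (c : ℝ) :
    ((c : ℂ) • X).IsHermitian :=
  hX.smul (Complex.conj_ofReal c)

lemma Matrix.nonempty_of_ne_zero {m k R : Type*} [Zero R] {X : Matrix m k R} (hX : X ≠ 0) :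
    Nonempty m := by
  obtain ⟨i, -, -⟩ : ∃ i j, X i j ≠ 0 := by
    by_contra! h
    exact hX (Matrix.ext h)
  exact ⟨i⟩

section Frobenius

variable {m k : Type*} [Fintype m] [Fintype k]

lemma re_trace_mul_conjTranspose_self_nonneg (X : Matrix m k ℂ) : 0 ≤ (X * Xᴴ).trace.re :=
  (Complex.nonneg_iff.mp (posSemidef_self_mul_conjTranspose X).trace_nonneg).1

lemma frobNorm_nonneg (X : Matrix m k ℂ) : 0 ≤ frobNorm X :=
  Real.sqrt_nonneg _

lemma frobNorm_sq (X : Matrix m k ℂ) : frobNorm X ^ 2 = (X * Xᴴ).trace.re :=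
  Real.sq_sqrt (re_trace_mul_conjTranspose_self_nonneg X)

lemma frobNorm_eq_zero {X : Matrix m k ℂ} : frobNorm X = 0 ↔ X = 0 := by
  have him := (Complex.nonneg_iff.mp (posSemidef_self_mul_conjTranspose X).trace_nonneg).2
  rw [frobNorm, Real.sqrt_eq_zero (re_trace_mul_conjTranspose_self_nonneg X),
    ← trace_mul_conjTranspose_self_eq_zero_iff, Complex.ext_iff]
  simp [← him]

lemma frobNorm_pos {X : Matrix m k ℂ} : 0 < frobNorm X ↔ X ≠ 0 := by
  rw [(frobNorm_nonneg X).lt_iff_ne', Ne, frobNorm_eq_zero]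

lemma re_trace_mul_conjTranspose_comm (X Y : Matrix m k ℂ) :
    (Y * Xᴴ).trace.re = (X * Yᴴ).trace.re := by
  rw [← conjTranspose_conjTranspose Y, ← conjTranspose_mul, trace_conjTranspose,
    conjTranspose_conjTranspose]
  rfl

lemma frobNorm_add_sq (X Y : Matrix m k ℂ) :
    frobNorm (X + Y) ^ 2 = frobNorm X ^ 2 + frobNorm Y ^ 2 + 2 * (X * Yᴴ).trace.re := by
  simp only [frobNorm_sq, conjTranspose_add, Matrix.mul_add, Matrix.add_mul, trace_add,
    Complex.add_re, re_trace_mul_conjTranspose_comm X Y]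
  ring

lemma two_mul_re_trace_mul_conjTranspose_le (X Y : Matrix m k ℂ) :
    2 * (X * Yᴴ).trace.re ≤ frobNorm X ^ 2 + frobNorm Y ^ 2 := by
  have h := frobNorm_add_sq X (-Y)
  simp only [conjTranspose_neg, Matrix.mul_neg, trace_neg, Complex.neg_re] at h
  rw [show frobNorm (-Y) = frobNorm Y by simp [frobNorm]] at h
  linarith [sq_nonneg (frobNorm (X + -Y))]

lemma frobNorm_real_smul (c : ℝ) (X : Matrix m k ℂ) :
    frobNorm ((c : ℂ) • X) = |c| * frobNorm X := by
  rw [frobNorm, conjTranspose_smul, Matrix.smul_mul, Matrix.mul_smul, trace_smul, trace_smul,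
    smul_smul]
  simp only [RCLike.star_def, Complex.conj_ofReal, smul_eq_mul, ← Complex.ofReal_mul,
    Complex.re_ofReal_mul]
  rw [Real.sqrt_mul (mul_self_nonneg c), Real.sqrt_mul_self_eq_abs, frobNorm]

lemma frobNorm_smul_one_add_sq [DecidableEq m] (c : ℝ) {Δ : Matrix m m ℂ} (hΔ : Δ.trace = 0) :
    frobNorm ((c : ℂ) • 1 + Δ) ^ 2 = c ^ 2 * Fintype.card m + frobNorm Δ ^ 2 := by
  have hcross : ((c : ℂ) • (1 : Matrix m m ℂ) * Δᴴ).trace = 0 := by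
    rw [Matrix.smul_mul, Matrix.one_mul, trace_smul, trace_conjTranspose, hΔ, star_zero, smul_zero]
  rw [frobNorm_add_sq, hcross, frobNorm_real_smul, mul_pow, sq_abs, frobNorm_sq]
  simp

lemma frobNorm_inv_smul_self {X : Matrix m k ℂ} (hX : X ≠ 0) :
    frobNorm ((((frobNorm X)⁻¹ : ℝ) : ℂ) • X) = 1 := by
  rw [frobNorm_real_smul, abs_inv, abs_of_nonneg (frobNorm_nonneg X),
    inv_mul_cancel₀ (frobNorm_pos.mpr hX).ne']

end Frobenius

lemma Real.neg_half_log_le_neg_sum_mul_log {ι : Type*} [Fintype ι] {p : ι → ℝ}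
    (hp : ∀ i, 0 ≤ p i) (hsum : ∑ i, p i = 1) {B : ℝ} (hB : ∑ i, p i ^ 2 ≤ B) :
    -(1 / 2) * Real.log B ≤ -∑ i, p i * Real.log (p i) := by
  set Q := ∑ i, p i ^ 2
  have hpQ (i : ι) : p i ^ 2 ≤ Q :=
    Finset.single_le_sum (fun j _ => sq_nonneg (p j)) (Finset.mem_univ i)
  have hQ : 0 < Q := by
    obtain ⟨i, hi⟩ : ∃ i, p i ≠ 0 := by
      by_contra! h
      simp [h] at hsum
    exact (pow_pos ((hp i).lt_of_ne' hi) 2).trans_le (hpQ i)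
  have hlog (i : ι) : p i * Real.log (p i) ≤ p i * Real.log √Q := by
    rcases (hp i).eq_or_lt with hi | hi
    · simp [← hi]
    · exact mul_le_mul_of_nonneg_left (Real.log_le_log hi (Real.le_sqrt_of_sq_le (hpQ i))) hi.le
  calc -(1 / 2) * Real.log B ≤ -(1 / 2) * Real.log Q := by
        linarith [Real.log_le_log hQ hB]
    _ = -∑ i, p i * Real.log √Q := by
        rw [← Finset.sum_mul, hsum, Real.log_sqrt hQ.le]
        ring
    _ ≤ -∑ i, p i * Real.log (p i) := neg_le_neg (Finset.sum_le_sum fun i _ => hlog i)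

section Spectrum

variable {m : Type*} [Fintype m] [DecidableEq m]

lemma Matrix.IsHermitian.frobNorm_sq_eq_sum_eigenvalues_sq {Y : Matrix m m ℂ}
    (hY : Y.IsHermitian) : frobNorm Y ^ 2 = ∑ i, hY.eigenvalues i ^ 2 := by
  rw [frobNorm_sq, hY.eq]
  conv_lhs => rw [hY.spectral_theorem, ← map_mul, Unitary.conjStarAlgAut_apply, trace_mul_cycle,
    Unitary.coe_star_mul_self, Matrix.one_mul, diagonal_mul_diagonal, trace_diagonal]
  simp [sq]

lemma Matrix.PosSemidef.sum_eigenvalues_eq_one {X : Matrix m m ℂ} (hX : X.PosSemidef)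
    (htr : X.trace = 1) : ∑ i, hX.isHermitian.eigenvalues i = 1 := by
  rw [hX.isHermitian.trace_eq_sum_eigenvalues] at htr
  simpa using congrArg Complex.re htr

lemma Matrix.PosSemidef.frobNorm_sq_le_one {X : Matrix m m ℂ} (hX : X.PosSemidef)
    (htr : X.trace = 1) : frobNorm X ^ 2 ≤ 1 := by
  have hsum := hX.sum_eigenvalues_eq_one htr
  have hle (i : m) : hX.isHermitian.eigenvalues i ≤ 1 :=
    hsum ▸ Finset.single_le_sum (fun j _ => hX.eigenvalues_nonneg j) (Finset.mem_univ i)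
  rw [hX.isHermitian.frobNorm_sq_eq_sum_eigenvalues_sq, ← hsum]
  exact Finset.sum_le_sum fun i _ => pow_le_of_le_one (hX.eigenvalues_nonneg i) (hle i) two_ne_zero

lemma neg_half_log_le_entropy {Y : Matrix m m ℂ} (hY : Y.PosSemidef) (htr : Y.trace = 1) {B : ℝ}
    (hB : frobNorm Y ^ 2 ≤ B) : -(1 / 2) * Real.log B ≤ entropy Y := by
  rw [hY.isHermitian.frobNorm_sq_eq_sum_eigenvalues_sq] at hB
  rw [entropy, dif_pos hY.isHermitian]
  exact Real.neg_half_log_le_neg_sum_mul_log hY.eigenvalues_nonneg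
    (hY.sum_eigenvalues_eq_one htr) hB

end Spectrum

section KrausMap

variable {ι m : Type*} [Fintype ι] [Fintype m] (A : ι → Matrix m m ℂ)

def krausMap (X : Matrix m m ℂ) : Matrix m m ℂ :=
  ∑ i, A i * X * (A i)ᴴ

lemma krausMap_add (X Y : Matrix m m ℂ) : krausMap A (X + Y) = krausMap A X + krausMap A Y := by
  simp only [krausMap, Matrix.mul_add, Matrix.add_mul, Finset.sum_add_distrib]

lemma krausMap_smul (c : ℂ) (X : Matrix m m ℂ) : krausMap A (c • X) = c • krausMap A X := by
  simp only [krausMap, Matrix.mul_smul, Matrix.smul_mul, Finset.smul_sum]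

lemma krausMap_zero : krausMap A 0 = 0 := by
  simp [krausMap]

lemma krausMap_one [DecidableEq m] (hA' : ∑ i, A i * (A i)ᴴ = 1) : krausMap A 1 = 1 := by
  simpa [krausMap] using hA'

lemma trace_krausMap [DecidableEq m] (hA : ∑ i, (A i)ᴴ * A i = 1) (X : Matrix m m ℂ) :
    (krausMap A X).trace = X.trace := by
  simp_rw [krausMap, trace_sum, trace_mul_cycle _ X, ← trace_sum, ← Finset.sum_mul, hA,
    Matrix.one_mul]

lemma Matrix.PosSemidef.krausMap {X : Matrix m m ℂ} (hX : X.PosSemidef) :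
    (krausMap A X).PosSemidef :=
  Matrix.posSemidef_sum _ fun i _ => hX.mul_mul_conjTranspose_same (A i)

lemma frobNorm_krausMap_sq (X : Matrix m m ℂ) :
    frobNorm (krausMap A X) ^ 2 =
      ∑ i, ∑ j, (X * ((A i)ᴴ * A j) * ((A i)ᴴ * A j * X)ᴴ).trace.re := by
  rw [frobNorm_sq, krausMap, conjTranspose_sum, Finset.sum_mul_sum, trace_sum, Complex.re_sum]
  refine Finset.sum_congr rfl fun i _ => ?_
  rw [trace_sum, Complex.re_sum]
  refine Finset.sum_congr rfl fun j _ => ?_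
  rw [Matrix.mul_assoc (A i), Matrix.mul_assoc, trace_mul_comm]
  simp only [conjTranspose_mul, conjTranspose_conjTranspose, Matrix.mul_assoc]

end KrausMap

noncomputable def normOnOrthogonal {m k : Type*} [Fintype m] [Fintype k]
    (τ : Matrix m m ℂ → Matrix k k ℂ) (U : Matrix m m ℂ) : ℝ :=
  sSup {d : ℝ | ∃ X : Matrix m m ℂ, X.IsHermitian ∧ frobNorm X ≤ 1 ∧
    (U * X).trace.re = 0 ∧ d = frobNorm (τ X)}

lemma sigma2_eq_sInf_normOnOrthogonal {m k : Type*} [Fintype m] [Fintype k]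
    (τ : Matrix m m ℂ → Matrix k k ℂ) :
    sigma2 τ = sInf {c : ℝ | ∃ U : Matrix m m ℂ, U.IsHermitian ∧ U ≠ 0 ∧
      c = normOnOrthogonal τ U} :=
  rfl

section BiQuantum

variable {ι m : Type*} [Fintype ι] [Fintype m] [DecidableEq m] (A : ι → Matrix m m ℂ)
  (hA : ∑ i, (A i)ᴴ * A i = 1) (hA' : ∑ i, A i * (A i)ᴴ = 1)
include hA hA'

lemma sum_sum_gram_mul_conjTranspose :
    ∑ i, ∑ j, (A i)ᴴ * A j * ((A i)ᴴ * A j)ᴴ = 1 := by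
  simp_rw [conjTranspose_mul, conjTranspose_conjTranspose, Matrix.mul_assoc, ← Matrix.mul_sum,
    ← Matrix.mul_assoc (A _), ← Finset.sum_mul, hA', Matrix.one_mul, hA]

lemma sum_sum_conjTranspose_gram_mul :
    ∑ i, ∑ j, ((A i)ᴴ * A j)ᴴ * ((A i)ᴴ * A j) = 1 := by
  rw [Finset.sum_comm]
  simp_rw [conjTranspose_mul, conjTranspose_conjTranspose, Matrix.mul_assoc, ← Matrix.mul_sum,
    ← Matrix.mul_assoc (A _), ← Finset.sum_mul, hA', Matrix.one_mul, hA]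

lemma sum_sum_frobNorm_mul_gram_sq (X : Matrix m m ℂ) :
    ∑ i, ∑ j, frobNorm (X * ((A i)ᴴ * A j)) ^ 2 = frobNorm X ^ 2 := by
  have h (B : Matrix m m ℂ) : X * B * (X * B)ᴴ = X * (B * Bᴴ) * Xᴴ := by
    simp only [conjTranspose_mul, Matrix.mul_assoc]
  simp_rw [frobNorm_sq, h, ← Complex.re_sum, ← trace_sum, ← Matrix.sum_mul, ← Matrix.mul_sum,
    sum_sum_gram_mul_conjTranspose A hA hA', Matrix.mul_one]

lemma sum_sum_frobNorm_gram_mul_sq (X : Matrix m m ℂ) :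
    ∑ i, ∑ j, frobNorm ((A i)ᴴ * A j * X) ^ 2 = frobNorm X ^ 2 := by
  have h (B : Matrix m m ℂ) : (B * X * (B * X)ᴴ).trace = ((Bᴴ * B) * (X * Xᴴ)).trace := by
    rw [trace_mul_comm, conjTranspose_mul, Matrix.mul_assoc, trace_mul_comm]
    simp only [Matrix.mul_assoc]
  simp_rw [frobNorm_sq, h, ← Complex.re_sum, ← trace_sum, ← Matrix.sum_mul,
    sum_sum_conjTranspose_gram_mul A hA hA', Matrix.one_mul]

lemma frobNorm_krausMap_le (X : Matrix m m ℂ) : frobNorm (krausMap A X) ≤ frobNorm X := by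
  refine (pow_le_pow_iff_left₀ (frobNorm_nonneg _) (frobNorm_nonneg _) two_ne_zero).mp ?_
  calc frobNorm (krausMap A X) ^ 2
      = ∑ i, ∑ j, (X * ((A i)ᴴ * A j) * ((A i)ᴴ * A j * X)ᴴ).trace.re := frobNorm_krausMap_sq A X
    _ ≤ ∑ i, ∑ j, (frobNorm (X * ((A i)ᴴ * A j)) ^ 2 + frobNorm ((A i)ᴴ * A j * X) ^ 2) / 2 := by
      gcongr with i _ j _
      linarith [two_mul_re_trace_mul_conjTranspose_le (X * ((A i)ᴴ * A j)) ((A i)ᴴ * A j * X)]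
    _ = frobNorm X ^ 2 := by
      simp_rw [← Finset.sum_div, Finset.sum_add_distrib, sum_sum_frobNorm_mul_gram_sq A hA hA',
        sum_sum_frobNorm_gram_mul_sq A hA hA']
      ring


lemma opNorm_krausMap [Nonempty m] : opNorm (krausMap A) = 1 := by
  set S := {c : ℝ | ∃ X : Matrix m m ℂ, X.IsHermitian ∧ frobNorm X ≤ 1 ∧
    c = frobNorm (krausMap A X)}
  have hbound : ∀ c ∈ S, c ≤ 1 := by
    rintro _ ⟨X, -, hX, rfl⟩
    exact (frobNorm_krausMap_le A hA hA' X).trans hX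
  have hone : (1 : ℝ) ∈ S := by
    refine ⟨_, isHermitian_one.real_smul _, (frobNorm_inv_smul_self one_ne_zero).le, ?_⟩
    rw [krausMap_smul, krausMap_one A hA', frobNorm_inv_smul_self one_ne_zero]
  exact le_antisymm (csSup_le ⟨1, hone⟩ hbound) (le_csSup ⟨1, hbound⟩ hone)

lemma div_frobNorm_le_normOnOrthogonal {U X : Matrix m m ℂ} (hX : X.IsHermitian) (hX0 : X ≠ 0)
    (hUX : (U * X).trace.re = 0) :
    frobNorm (krausMap A X) / frobNorm X ≤ normOnOrthogonal (krausMap A) U := by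
  refine le_csSup ⟨1, ?_⟩ ⟨_, hX.real_smul (frobNorm X)⁻¹, (frobNorm_inv_smul_self hX0).le, ?_, ?_⟩
  · rintro _ ⟨Y, -, hY, -, rfl⟩
    exact (frobNorm_krausMap_le A hA hA' Y).trans hY
  · simp [trace_smul, hUX]
  · rw [krausMap_smul, frobNorm_real_smul, abs_inv, abs_of_nonneg (frobNorm_nonneg X),
      inv_mul_eq_div]

lemma frobNorm_smul_one_add_krausMap_sq (a : ℝ) {Δ : Matrix m m ℂ} (hΔ : Δ.trace = 0) :
    frobNorm (krausMap A ((a : ℂ) • 1 + Δ)) ^ 2 =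
      a ^ 2 * Fintype.card m + frobNorm (krausMap A Δ) ^ 2 := by
  rw [krausMap_add, krausMap_smul, krausMap_one A hA',
    frobNorm_smul_one_add_sq a (by rw [trace_krausMap A hA, hΔ])]

lemma frobNorm_krausMap_mul_le {Δ : Matrix m m ℂ} (hΔ : Δ.trace = 0) (a b : ℝ) :
    frobNorm (krausMap A Δ) * frobNorm ((a : ℂ) • 1 + (b : ℂ) • Δ) ≤
      frobNorm (krausMap A ((a : ℂ) • 1 + (b : ℂ) • Δ)) * frobNorm Δ := by
  have hbΔ : ((b : ℂ) • Δ).trace = 0 := by rw [trace_smul, hΔ, smul_zero]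
  have hX := frobNorm_smul_one_add_sq a hbΔ
  have hτX := frobNorm_smul_one_add_krausMap_sq A hA hA' a hbΔ
  rw [krausMap_smul, frobNorm_real_smul, mul_pow, sq_abs] at hτX
  rw [frobNorm_real_smul, mul_pow, sq_abs] at hX
  have hle := frobNorm_krausMap_le A hA hA' Δ
  have hgap : 0 ≤ a ^ 2 * Fintype.card m * (frobNorm Δ ^ 2 - frobNorm (krausMap A Δ) ^ 2) :=
    mul_nonneg (by positivity) (sub_nonneg.mpr (pow_le_pow_left₀ (frobNorm_nonneg _) hle 2))
  refine (pow_le_pow_iff_left₀ (mul_nonneg (frobNorm_nonneg _) (frobNorm_nonneg _))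
    (mul_nonneg (frobNorm_nonneg _) (frobNorm_nonneg _)) two_ne_zero).mp ?_
  rw [mul_pow, mul_pow, hX, hτX]
  linarith

lemma exists_orthogonal_div_frobNorm_krausMap_ge {Δ : Matrix m m ℂ} (hΔ : Δ.IsHermitian)
    (hΔt : Δ.trace = 0) (hΔ0 : Δ ≠ 0) (U : Matrix m m ℂ) :
    ∃ X : Matrix m m ℂ, X.IsHermitian ∧ X ≠ 0 ∧ (U * X).trace.re = 0 ∧
      frobNorm (krausMap A Δ) / frobNorm Δ ≤ frobNorm (krausMap A X) / frobNorm X := by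
  have := Matrix.nonempty_of_ne_zero hΔ0
  obtain ⟨a, b, hab, horth⟩ : ∃ a b : ℝ, (a ≠ 0 ∨ b ≠ 0) ∧
      a * U.trace.re + b * (U * Δ).trace.re = 0 := by
    by_cases hβ : (U * Δ).trace.re = 0
    · exact ⟨0, 1, Or.inr one_ne_zero, by simp [hβ]⟩
    · exact ⟨1, -U.trace.re / (U * Δ).trace.re, Or.inl one_ne_zero, by field_simp; ring⟩
  have hX0 : (a : ℂ) • 1 + (b : ℂ) • Δ ≠ 0 := by
    have hsq := frobNorm_smul_one_add_sq a (show ((b : ℂ) • Δ).trace = 0 by simp [hΔt])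
    rw [frobNorm_real_smul, mul_pow, sq_abs] at hsq
    have hn : (0 : ℝ) < Fintype.card m := Nat.cast_pos.mpr Fintype.card_pos
    have hf := frobNorm_pos.mpr hΔ0
    rw [Ne, ← frobNorm_eq_zero, ← pow_eq_zero_iff two_ne_zero, hsq]
    rcases hab with ha | hb
    · exact (by positivity : (0 : ℝ) < _).ne'
    · exact (by positivity : (0 : ℝ) < _).ne'
  refine ⟨_, (isHermitian_one.real_smul a).add (hΔ.real_smul b), hX0, ?_, ?_⟩
  · simpa [Matrix.mul_add, trace_smul] using horth
  · rw [div_le_div_iff₀ (frobNorm_pos.mpr hΔ0) (frobNorm_pos.mpr hX0)]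
    exact frobNorm_krausMap_mul_le A hA hA' hΔt a b

lemma frobNorm_krausMap_le_sigma2_mul {Δ : Matrix m m ℂ} (hΔ : Δ.IsHermitian)
    (hΔt : Δ.trace = 0) : frobNorm (krausMap A Δ) ≤ sigma2 (krausMap A) * frobNorm Δ := by
  rcases eq_or_ne Δ 0 with rfl | hΔ0
  · simp [krausMap_zero, frobNorm]
  have := Matrix.nonempty_of_ne_zero hΔ0
  rw [← div_le_iff₀ (frobNorm_pos.mpr hΔ0), sigma2_eq_sInf_normOnOrthogonal]
  refine le_csInf ⟨_, 1, isHermitian_one, one_ne_zero, rfl⟩ ?_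
  rintro _ ⟨U, -, -, rfl⟩
  obtain ⟨X, hX, hX0, hUX, hle⟩ :=
    exists_orthogonal_div_frobNorm_krausMap_ge A hA hA' hΔ hΔt hΔ0 U
  exact hle.trans (div_frobNorm_le_normOnOrthogonal A hA hA' hX hX0 hUX)

lemma frobNorm_krausMap_sq_le [Nonempty m] {X : Matrix m m ℂ} (hX : X.PosSemidef)
    (htr : X.trace = 1) :
    frobNorm (krausMap A X) ^ 2 ≤
      sigma2 (krausMap A) ^ 2 + (1 - sigma2 (krausMap A) ^ 2) / Fintype.card m := by
  set s := sigma2 (krausMap A)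
  set c := ((Fintype.card m : ℝ))⁻¹
  have hcard : c ^ 2 * Fintype.card m = c := by
    have : (Fintype.card m : ℝ) ≠ 0 := Nat.cast_ne_zero.mpr Fintype.card_ne_zero
    rw [sq, mul_assoc, inv_mul_cancel₀ this, mul_one]
  set Δ := X - (c : ℂ) • 1
  have hΔt : Δ.trace = 0 := by
    have : (Fintype.card m : ℂ) ≠ 0 := Nat.cast_ne_zero.mpr Fintype.card_ne_zero
    simp [Δ, htr, trace_smul, c, this]
  have hXΔ : X = (c : ℂ) • 1 + Δ := by simp [Δ]
  have hΔ : frobNorm Δ ^ 2 ≤ 1 - c := by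
    have := hX.frobNorm_sq_le_one htr
    rw [hXΔ, frobNorm_smul_one_add_sq c hΔt, hcard] at this
    linarith
  have hτΔ : frobNorm (krausMap A Δ) ^ 2 ≤ s ^ 2 * frobNorm Δ ^ 2 := by
    rw [← mul_pow]
    exact pow_le_pow_left₀ (frobNorm_nonneg _)
      (frobNorm_krausMap_le_sigma2_mul A hA hA'
        (hX.isHermitian.sub (isHermitian_one.real_smul c)) hΔt) 2
  rw [hXΔ, frobNorm_smul_one_add_krausMap_sq A hA hA' c hΔt, hcard, div_eq_mul_inv]
  nlinarith [mul_le_mul_of_nonneg_left hΔ (sq_nonneg s)]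

end BiQuantum

lemma le_minEntropy {m k : Type*} [Fintype m] [DecidableEq m] [Nonempty m] [Fintype k]
    [DecidableEq k] {τ : Matrix m m ℂ → Matrix k k ℂ} {b : ℝ}
    (h : ∀ X : Matrix m m ℂ, X.PosSemidef → X.trace = 1 → b ≤ entropy (τ X)) :
    b ≤ minEntropy τ := by
  have hc : (Fintype.card m : ℂ) ≠ 0 := Nat.cast_ne_zero.mpr Fintype.card_ne_zero
  have hX₀ : ((Fintype.card m : ℂ)⁻¹ • (1 : Matrix m m ℂ)).PosSemidef :=
    PosSemidef.one.smul (by simp)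
  refine le_csInf ⟨_, _, hX₀, by simp [trace_smul, hc], rfl⟩ ?_
  rintro _ ⟨X, hX, htr, rfl⟩
  exact h X hX htr

theorem stmt_16_general {n l : ℕ} (hn : 2 ≤ n) (A : Fin l → Matrix (Fin n) (Fin n) ℂ)
    (hA : ∑ i, (A i)ᴴ * A i = 1) (hA' : ∑ i, A i * (A i)ᴴ = 1)
    (s : ℝ) (hs : s = sigma2 (fun X => ∑ i, A i * X * (A i)ᴴ)) :
    opNorm (fun X => ∑ i, A i * X * (A i)ᴴ) = 1 ∧
    -(1 / 2 : ℝ) * Real.log (s ^ 2 + (1 - s ^ 2) / n) ≤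
      minEntropy (fun X => ∑ i, A i * X * (A i)ᴴ) := by
  have : Nonempty (Fin n) := ⟨⟨0, by omega⟩⟩
  refine ⟨opNorm_krausMap A hA hA', le_minEntropy fun X hX htr => ?_⟩
  refine neg_half_log_le_entropy (hX.krausMap A) (by rw [trace_krausMap A hA, htr]) ?_
  have hpurity := frobNorm_krausMap_sq_le A hA hA' hX htr
  rw [Fintype.card_fin] at hpurity
  rwa [hs]

/-- Let τ : Sₙ(ℂ) → Sₙ(ℂ) be a bi-quantum channel (∑ᵢ Aᵢ* Aᵢ = I and
∑ᵢ Aᵢ Aᵢ* = I) with n ≥ 2, and suppose σ₂(τ) < 1.  Then σ₁(τ) = 1 and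
H(τ) ≥ -(1/2) log(σ₂(τ)² + (1 - σ₂(τ)²)/n). -/
theorem stmt_16 {n l : ℕ} (hn : 2 ≤ n) (A : Fin l → Matrix (Fin n) (Fin n) ℂ)
    (hA : ∑ i, (A i)ᴴ * A i = 1) (hA' : ∑ i, A i * (A i)ᴴ = 1)
    (s : ℝ) (hs : s = sigma2 (fun X => ∑ i, A i * X * (A i)ᴴ))
    (hs1 : s < 1) :
    opNorm (fun X => ∑ i, A i * X * (A i)ᴴ) = 1 ∧
    -(1 / 2 : ℝ) * Real.log (s ^ 2 + (1 - s ^ 2) / n) ≤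
      minEntropy (fun X => ∑ i, A i * X * (A i)ᴴ) :=
  stmt_16_general hn A hA hA' s hs
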